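/- arXiv:1304.1944 — 5 statements merged into one kernel-verified Lean document; each statement's English description precedes it below -/
import Mathlib

section
/- Correctness of the lopsided division algorithm (digit computation): let a b : ℤ with b odd, and let c, r : ℕ → ℤ be the lopsided-division sequences for a and b. Then for every j : ℕ, the integer 2^j divides a - b * (∑_{i < j} (if (c i).testBit i then 2^i else 0)); in other words, the diagonal bits c_i^{(i)} produced by the algorithm are exactly the first j binary digits of the 2-adic quotient a/b. -/
instance : XorOp ℤ := ⟨Int.xor⟩
instance : AndOp ℤ := ⟨Int.land⟩

/-!
Write `dᵢ = (cᵢ).testBit i` and `tᵢ = dᵢ 2ⁱ b`. By the borrow-save identity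
`(x ^^^ y ^^^ z) - 2 * borrow x y z = x - y - z`, every step of the algorithm subtracts `tᵢ`
from `cᵢ - rᵢ`, so `cⱼ - rⱼ = a - b ∑_{i<j} dᵢ 2ⁱ`.
On the other hand `2ⁱ ∣ cᵢ` and `2ⁱ⁺¹ ∣ rᵢ`: as `b` is odd, `tᵢ` agrees with `cᵢ` in the bits
below `i + 1`, where `rᵢ` vanishes, so both the xor and the borrow of the step vanish there.
Hence `2ʲ ∣ cⱼ - rⱼ`.
-/

namespace Int

theorem testBit_xor (x y : ℤ) (k : ℕ) : (x ^^^ y).testBit k = (x.testBit k ^^ y.testBit k) :=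
  testBit_lxor x y k

theorem testBit_and (x y : ℤ) (k : ℕ) : (x &&& y).testBit k = (x.testBit k && y.testBit k) :=
  testBit_land x y k

theorem testBit_not (x : ℤ) (k : ℕ) : (~~~x).testBit k = !x.testBit k :=
  testBit_lnot x k

theorem testBit_zero_left (k : ℕ) : (0 : ℤ).testBit k = false :=
  Nat.zero_testBit k

theorem xor_bit (p q : Bool) (x y : ℤ) : bit p x ^^^ bit q y = bit (p ^^ q) (x ^^^ y) :=
  lxor_bit p x q y

theorem and_bit (p q : Bool) (x y : ℤ) : bit p x &&& bit q y = bit (p && q) (x &&& y) :=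
  land_bit p x q y

theorem not_bit (p : Bool) (x : ℤ) : ~~~bit p x = bit (!p) (~~~x) :=
  lnot_bit p x

theorem exists_eq_bit (x : ℤ) : ∃ p x', x = bit p x' :=
  ⟨_, _, (bit_decomp x).symm⟩

theorem eq_zero_of_forall_two_pow_dvd {x : ℤ} (h : ∀ n : ℕ, 2 ^ n ∣ x) : x = 0 :=
  eq_zero_of_dvd_of_natAbs_lt_natAbs (h x.natAbs) (by simpa [natAbs_pow] using Nat.lt_two_pow_self)

theorem two_pow_succ_dvd_bit_iff (n : ℕ) (p : Bool) (x : ℤ) :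
    2 ^ (n + 1) ∣ bit p x ↔ p = false ∧ 2 ^ n ∣ x := by
  cases p
  · simp [bit_val, pow_succ', mul_dvd_mul_iff_left]
  · simp only [bit_val, cond_true, Bool.true_eq_false, false_and, iff_false]
    intro h
    have : (2 : ℤ) ∣ 2 * x + 1 := (dvd_pow_self 2 n.succ_ne_zero).trans h
    omega

theorem two_pow_dvd_iff_testBit {n : ℕ} {x : ℤ} :
    2 ^ n ∣ x ↔ ∀ k < n, x.testBit k = false := by
  induction n generalizing x with
  | zero => simp
  | succ n ih =>
    obtain ⟨p, x, rfl⟩ := exists_eq_bit x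
    rw [two_pow_succ_dvd_bit_iff, ih, Nat.forall_lt_succ_left, testBit_bit_zero]
    simp only [← Nat.succ_eq_add_one, testBit_bit_succ]

theorem testBit_two_pow_mul_add (i : ℕ) (x : ℤ) (k : ℕ) :
    (2 ^ i * x).testBit (i + k) = x.testBit k := by
  induction i with
  | zero => simp
  | succ i ih =>
    have : 2 ^ (i + 1) * x = bit false (2 ^ i * x) := by rw [bit_val, cond_false, pow_succ]; ring
    rw [this, Nat.add_right_comm, testBit_bit_succ, ih]

theorem testBit_zero_of_odd {x : ℤ} (hx : Odd x) : x.testBit 0 = true := by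
  obtain ⟨m, rfl⟩ := hx
  have : 2 * m + 1 = bit true m := by simp [bit_val]
  rw [this, testBit_bit_zero]

/-- The borrow word of the subtraction `x - y - z`: the bitwise majority of `~~~x`, `y`, `z`. -/
def borrow (x y z : ℤ) : ℤ := (~~~x &&& y) ^^^ (y &&& z) ^^^ (z &&& ~~~x)

theorem borrow_bit (p q s : Bool) (x y z : ℤ) :
    borrow (bit p x) (bit q y) (bit s z) =
      bit ((!p && q) ^^ (q && s) ^^ (s && !p)) (borrow x y z) := by
  simp only [borrow, not_bit, and_bit, xor_bit]

theorem xor_xor_sub_two_mul_borrow (x y z : ℤ) :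
    (x ^^^ y ^^^ z) - 2 * borrow x y z = x - y - z := by
  suffices h : ∀ n : ℕ, ∀ x y z : ℤ,
      2 ^ n ∣ (x ^^^ y ^^^ z) - 2 * borrow x y z - (x - y - z) from
    sub_eq_zero.mp (eq_zero_of_forall_two_pow_dvd fun n => h n x y z)
  intro n
  induction n with
  | zero => simp
  | succ n ih =>
    intro x y z
    obtain ⟨p, x, rfl⟩ := exists_eq_bit x
    obtain ⟨q, y, rfl⟩ := exists_eq_bit y
    obtain ⟨s, z, rfl⟩ := exists_eq_bit z
    have hbit : (bit p x ^^^ bit q y ^^^ bit s z) - 2 * borrow (bit p x) (bit q y) (bit s z)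
          - (bit p x - bit q y - bit s z)
        = 2 * ((x ^^^ y ^^^ z) - 2 * borrow x y z - (x - y - z)) := by
      simp only [xor_bit, borrow_bit]
      cases p <;> cases q <;> cases s <;>
        simp only [bit_val, Bool.not_false, Bool.not_true, Bool.and_false, Bool.and_true,
          Bool.and_self, Bool.bne_false, Bool.bne_true, bne_self_eq_false, cond_false, cond_true] <;>
        ring
    rw [hbit, pow_succ']
    exact mul_dvd_mul_left 2 (ih x y z)

end Int

namespace LopsidedDivision

theorem two_pow_dvd_xor_xor_and_borrow {n : ℕ} {x y z : ℤ} (hy : 2 ^ n ∣ y)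
    (hz : ∀ k < n, z.testBit k = x.testBit k) :
    2 ^ n ∣ x ^^^ y ^^^ z ∧ 2 ^ n ∣ Int.borrow x y z := by
  simp only [Int.two_pow_dvd_iff_testBit] at hy ⊢
  constructor <;> intro k hk <;>
    simp only [Int.borrow, Int.testBit_xor, Int.testBit_and, Int.testBit_not, hy k hk, hz k hk] <;>
    cases x.testBit k <;> rfl

theorem testBit_ite_two_pow_mul_of_dvd {b c : ℤ} (hb : Odd b) {i : ℕ} (hc : 2 ^ i ∣ c) :
    ∀ k < i + 1, (if c.testBit i then 2 ^ i * b else 0).testBit k = c.testBit k := by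
  intro k hk
  rcases Nat.lt_succ_iff_lt_or_eq.mp hk with hk | rfl
  · rw [Int.two_pow_dvd_iff_testBit.mp hc k hk]
    split_ifs
    · exact Int.two_pow_dvd_iff_testBit.mp (dvd_mul_right _ _) k hk
    · exact Int.testBit_zero_left k
  · split_ifs with h
    · have hbit := Int.testBit_two_pow_mul_add k b 0
      rw [k.add_zero, Int.testBit_zero_of_odd hb] at hbit
      rw [h, hbit]
    · rw [Int.testBit_zero_left, Bool.eq_false_iff.mpr h]

end LopsidedDivision

/-- Correctness of the lopsided division algorithm (digit computation): the diagonal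
bits `c i .testBit i` are the first `j` binary digits of the 2-adic quotient `a/b`,
i.e. `2^j` divides `a - b * (∑_{i<j} bit_i · 2^i)`. -/
theorem lopsided_division_digits (a b : ℤ) (hb : Odd b) (c r : ℕ → ℤ)
    (hc0 : c 0 = a) (hr0 : r 0 = 0)
    (hc : ∀ i, c (i + 1) =
      c i ^^^ r i ^^^ (if (c i).testBit i then 2 ^ i * b else 0))
    (hr : ∀ i, r (i + 1) =
      2 * (((~~~(c i)) &&& r i)
        ^^^ ((r i) &&& (if (c i).testBit i then 2 ^ i * b else 0))
        ^^^ ((if (c i).testBit i then 2 ^ i * b else 0) &&& (~~~(c i))))) :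
    ∀ j : ℕ, (2 ^ j : ℤ) ∣
      a - b * ∑ i ∈ Finset.range j, (if (c i).testBit i then (2 : ℤ) ^ i else 0) := by
  have hr' : ∀ i, r (i + 1) =
      2 * Int.borrow (c i) (r i) (if (c i).testBit i then 2 ^ i * b else 0) := hr
  have hdvd : ∀ i, 2 ^ i ∣ c i ∧ 2 ^ (i + 1) ∣ r i := by
    intro i
    induction i with
    | zero => simp [hr0]
    | succ i ih =>
      obtain ⟨hxor, hborrow⟩ :=
        LopsidedDivision.two_pow_dvd_xor_xor_and_borrow ih.2
          (LopsidedDivision.testBit_ite_two_pow_mul_of_dvd hb ih.1)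
      rw [hc, hr', pow_succ' _ (i + 1)]
      exact ⟨hxor, mul_dvd_mul_left 2 hborrow⟩
  have hinv : ∀ j, c j - r j =
      a - b * ∑ i ∈ Finset.range j, (if (c i).testBit i then (2 : ℤ) ^ i else 0) := by
    intro j
    induction j with
    | zero => simp [hc0, hr0]
    | succ j ih =>
      rw [hc, hr', Int.xor_xor_sub_two_mul_borrow, ih, Finset.sum_range_succ]
      split_ifs <;> ring
  intro j
  rw [← hinv j]
  exact dvd_sub (hdvd j).1 ((pow_dvd_pow 2 j.le_succ).trans (hdvd j).2)
end

section
/- Quotient readout for lopsided division: let a b : ℕ be positive with b odd, b ≤ a, and let Γ = 1 + Nat.size a - Nat.size b. Let c, r : ℕ → ℤ be the lopsided-division sequences for (a : ℤ) and (b : ℤ). If b divides a, then the quotient is given by the diagonal bits of the algorithm: (a / b : ℤ) = ∑_{i < Γ} (if (c i).testBit i then 2^i else 0). -/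
namespace Int

theorem testBit_zero_eq_decide_odd (x : ℤ) : x.testBit 0 = decide (Odd x) := by
  cases x using Int.bitCasesOn with
  | h a x => rw [testBit_bit_zero, bit_val]; cases a <;> simp [parity_simps]

theorem testBit_two_pow_mul (x : ℤ) (n k : ℕ) : (2 ^ n * x).testBit (n + k) = x.testBit k := by
  induction n with
  | zero => simp
  | succ n ih =>
    rw [pow_succ', mul_assoc, ← ih, Nat.add_right_comm]
    simpa [bit_val] using testBit_bit_succ (n + k) false (2 ^ n * x)

theorem testBit_two_pow_mul_self (x : ℤ) (n : ℕ) : (2 ^ n * x).testBit n = decide (Odd x) := by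
  rw [← testBit_zero_eq_decide_odd, ← testBit_two_pow_mul x n 0, add_zero]

theorem two_pow_dvd_iff_testBit_eq_false {x : ℤ} {n : ℕ} :
    2 ^ n ∣ x ↔ ∀ k < n, x.testBit k = false := by
  constructor
  · rintro ⟨y, rfl⟩ k hk
    obtain ⟨m, rfl⟩ := Nat.exists_eq_add_of_lt hk
    rw [add_assoc, pow_add, mul_assoc, testBit_two_pow_mul_self]
    simp [parity_simps]
  · induction n generalizing x with
    | zero => simp
    | succ n ih =>
      intro h
      obtain ⟨y, rfl⟩ : 2 ∣ x := by
        rw [← even_iff_two_dvd, ← not_odd_iff_even]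
        simpa [testBit_zero_eq_decide_odd] using h 0 n.succ_pos
      rw [pow_succ']
      refine mul_dvd_mul_left 2 (ih fun k hk => ?_)
      rw [← testBit_two_pow_mul y 1 k, pow_one, add_comm]
      exact h (k + 1) (by omega)

theorem xor_def (x y : ℤ) : x ^^^ y = Int.xor x y := rfl

theorem and_def (x y : ℤ) : x &&& y = x.land y := rfl

theorem not_eq_lnot (x : ℤ) : ~~~x = x.lnot := by
  cases x <;> rfl

theorem not_eq_neg_sub_one (x : ℤ) : ~~~x = -x - 1 := by
  rw [not_eq_lnot]
  cases x <;> simp only [lnot, negSucc_eq, ofNat_eq_natCast] <;> ring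

theorem not_xor (x y : ℤ) : ~~~(x ^^^ y) = ~~~x ^^^ y := by
  cases x <;> cases y <;> rfl

def majority (x y z : ℤ) : ℤ := (x &&& y) ^^^ (y &&& z) ^^^ (z &&& x)

theorem testBit_majority (x y z : ℤ) (k : ℕ) :
    (majority x y z).testBit k = Bool.atLeastTwo (x.testBit k) (y.testBit k) (z.testBit k) := by
  simp only [majority, testBit_xor, testBit_and]
  cases x.testBit k <;> cases y.testBit k <;> cases z.testBit k <;> rfl

theorem add_add_eq_xor_xor_add_two_mul_majority (x y z : ℤ) :
    x + y + z = (x ^^^ y ^^^ z) + 2 * majority x y z := by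
  rw [← sub_eq_zero]
  refine eq_zero_of_forall_two_pow_dvd fun n => ?_
  induction n generalizing x y z with
  | zero => simp
  | succ n ih =>
    cases x using Int.bitCasesOn with | h a x =>
    cases y using Int.bitCasesOn with | h b y =>
    cases z using Int.bitCasesOn with | h c z =>
    have one_bit_adder : (cond a 1 0 : ℤ) + cond b 1 0 + cond c 1 0 =
        cond (a ^^ b ^^ c) 1 0 + 2 * cond ((a && b) ^^ (b && c) ^^ (c && a)) 1 0 := by
      cases a <;> cases b <;> cases c <;> rfl
    have halve : bit a x + bit b y + bit c z - ((bit a x ^^^ bit b y ^^^ bit c z)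
        + 2 * majority (bit a x) (bit b y) (bit c z)) =
        2 * (x + y + z - ((x ^^^ y ^^^ z) + 2 * majority x y z)) := by
      simp only [majority, xor_def, and_def, lxor_bit, land_bit]
      simp only [bit_val]
      linear_combination one_bit_adder
    rw [halve, pow_succ']
    exact mul_dvd_mul_left 2 (ih x y z)

theorem xor_xor_sub_two_mul_majority_not (x y z : ℤ) :
    (x ^^^ y ^^^ z) - 2 * majority (~~~x) y z = x - y - z := by
  have h := add_add_eq_xor_xor_add_two_mul_majority (~~~x) y z
  set M := majority (~~~x) y z
  rw [← not_xor, ← not_xor, not_eq_neg_sub_one, not_eq_neg_sub_one] at h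
  linarith

end Int

open Int

def lopsidedSubtrahend (b c : ℤ) (i : ℕ) : ℤ := if c.testBit i then 2 ^ i * b else 0

theorem testBit_lopsidedSubtrahend_of_le {b : ℤ} (hb : Odd b) (c : ℤ) {i k : ℕ}
    (hk : k ≤ i) :
    (lopsidedSubtrahend b c i).testBit k = (c.testBit i && decide (k = i)) := by
  unfold lopsidedSubtrahend
  split_ifs with hc
  · obtain hk | rfl := hk.lt_or_eq
    · simpa [hk.ne] using two_pow_dvd_iff_testBit_eq_false.mp (dvd_mul_right _ b) k hk
    · simp [testBit_two_pow_mul_self, hb, hc]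
  · simp only [hc, Bool.false_and]
    exact Nat.zero_testBit k

/-- Below bit `i` both `r` and the subtrahend vanish; at bit `i` the subtrahend carries bit `i`
of `c`, which is the negation of bit `i` of `~~~c`. Either way at most one input bit is set. -/
theorem two_pow_dvd_majority_not_lopsidedSubtrahend {b : ℤ} (hb : Odd b) {c r : ℤ} {i : ℕ}
    (hr : 2 ^ (i + 1) ∣ r) : 2 ^ (i + 1) ∣ majority (~~~c) r (lopsidedSubtrahend b c i) := by
  rw [two_pow_dvd_iff_testBit_eq_false] at hr ⊢
  intro k hk
  rw [testBit_majority, testBit_not, hr k hk,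
    testBit_lopsidedSubtrahend_of_le hb c (Nat.le_of_lt_succ hk)]
  obtain hk | rfl := (Nat.le_of_lt_succ hk).lt_or_eq
  · simp [hk.ne]
  · cases c.testBit k <;> rfl

theorem two_pow_succ_dvd_sub_lopsidedSubtrahend {b : ℤ} (hb : Odd b) {c r : ℤ} {i : ℕ}
    (hr : 2 ^ (i + 1) ∣ r) (hcr : 2 ^ i ∣ c - r) :
    2 ^ (i + 1) ∣ c - r - lopsidedSubtrahend b c i := by
  obtain ⟨m, hm⟩ := hcr
  obtain ⟨s, rfl⟩ := hr
  have hc : c = 2 ^ i * (m + 2 * s) := by rw [pow_succ] at hm; linear_combination hm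
  have hdigit : c.testBit i = decide (Odd m) := by
    simp [hc, testBit_two_pow_mul_self, parity_simps]
  unfold lopsidedSubtrahend
  rw [hm, hdigit, pow_succ]
  by_cases hodd : Odd m
  · simpa [hodd, ← mul_sub] using
      mul_dvd_mul_left (2 ^ i) (even_iff_two_dvd.mp (hodd.sub_odd hb))
  · simpa [hodd] using
      mul_dvd_mul_left (2 ^ i) (even_iff_two_dvd.mp (not_odd_iff_even.mp hodd))

structure IsLopsidedDivision (a b : ℤ) (c r : ℕ → ℤ) : Prop where
  c_zero : c 0 = a
  r_zero : r 0 = 0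
  c_succ (i : ℕ) : c (i + 1) = c i ^^^ r i ^^^ lopsidedSubtrahend b (c i) i
  r_succ (i : ℕ) : r (i + 1) = 2 * majority (~~~(c i)) (r i) (lopsidedSubtrahend b (c i) i)

def diagonalReadout (c : ℕ → ℤ) (n : ℕ) : ℤ :=
  ∑ i ∈ Finset.range n, if (c i).testBit i then 2 ^ i else 0

theorem diagonalReadout_succ (c : ℕ → ℤ) (n : ℕ) :
    diagonalReadout c (n + 1) = diagonalReadout c n + if (c n).testBit n then 2 ^ n else 0 :=
  Finset.sum_range_succ _ n

theorem diagonalReadout_nonneg (c : ℕ → ℤ) (n : ℕ) : 0 ≤ diagonalReadout c n :=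
  Finset.sum_nonneg fun i _ => by split_ifs <;> positivity

theorem diagonalReadout_lt_two_pow (c : ℕ → ℤ) (n : ℕ) : diagonalReadout c n < 2 ^ n := by
  induction n with
  | zero => simp [diagonalReadout]
  | succ n ih =>
    rw [diagonalReadout_succ, pow_succ]
    split_ifs <;> linarith [pow_pos (two_pos : (0 : ℤ) < 2) n]

namespace IsLopsidedDivision

variable {a b : ℤ} {c r : ℕ → ℤ}

theorem sub_succ (h : IsLopsidedDivision a b c r) (i : ℕ) :
    c (i + 1) - r (i + 1) = c i - r i - lopsidedSubtrahend b (c i) i := by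
  rw [h.c_succ, h.r_succ, xor_xor_sub_two_mul_majority_not]

theorem sub_eq (h : IsLopsidedDivision a b c r) (n : ℕ) :
    c n - r n = a - b * diagonalReadout c n := by
  induction n with
  | zero => simp [h.c_zero, h.r_zero, diagonalReadout]
  | succ n ih =>
    rw [h.sub_succ, ih, diagonalReadout_succ, lopsidedSubtrahend]
    split_ifs <;> ring

theorem two_pow_dvd (h : IsLopsidedDivision a b c r) (hb : Odd b) (n : ℕ) :
    2 ^ (n + 1) ∣ r n ∧ 2 ^ n ∣ c n - r n := by
  induction n with
  | zero => simp [h.r_zero]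
  | succ n ih =>
    obtain ⟨hr, hcr⟩ := ih
    refine ⟨?_, ?_⟩
    · rw [h.r_succ, pow_succ']
      exact mul_dvd_mul_left 2 (two_pow_dvd_majority_not_lopsidedSubtrahend hb hr)
    · rw [h.sub_succ]
      exact two_pow_succ_dvd_sub_lopsidedSubtrahend hb hr hcr

theorem eq_diagonalReadout (h : IsLopsidedDivision a b c r) (hb : Odd b) {q : ℤ} {n : ℕ}
    (hq : a = b * q) (hq0 : 0 ≤ q) (hqn : q < 2 ^ n) : q = diagonalReadout c n := by
  have hdvd : 2 ^ n ∣ b * (q - diagonalReadout c n) := by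
    rw [mul_sub, ← hq, ← h.sub_eq]
    exact (h.two_pow_dvd hb n).2
  have hcop : IsCoprime ((2 : ℤ) ^ n) b := (isCoprime_two_left.mpr hb).pow_left
  rw [← sub_eq_zero]
  exact eq_zero_of_abs_lt_dvd (hcop.dvd_of_dvd_mul_left hdvd) (abs_sub_lt_of_nonneg_of_lt
    hq0 hqn (diagonalReadout_nonneg c n) (diagonalReadout_lt_two_pow c n))

end IsLopsidedDivision

theorem Nat.lt_two_pow_one_add_size_sub_size {a b q : ℕ} (hb : 0 < b) (h : b * q = a) :
    q < 2 ^ (1 + a.size - b.size) := by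
  have hbsize : 1 ≤ b.size := Nat.size_pos.mpr hb
  have hb_ge : 2 ^ (b.size - 1) ≤ b := not_lt.mp fun hlt => by
    have := Nat.size_le.mpr hlt
    omega
  have hlt : q * 2 ^ (b.size - 1) < 2 ^ (1 + a.size - b.size) * 2 ^ (b.size - 1) :=
    calc q * 2 ^ (b.size - 1) ≤ b * q := by rw [mul_comm]; exact Nat.mul_le_mul_right q hb_ge
      _ = a := h
      _ < 2 ^ a.size := Nat.lt_size_self a
      _ ≤ 2 ^ (1 + a.size - b.size) * 2 ^ (b.size - 1) := by
        rw [← pow_add]; exact Nat.pow_le_pow_right two_pos (by omega)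
  exact Nat.lt_of_mul_lt_mul_right hlt

theorem lopsided_division_quotient_general (a b : ℕ)
    (hb : Odd b) (c r : ℕ → ℤ)
    (hc0 : c 0 = (a : ℤ)) (hr0 : r 0 = 0)
    (hc : ∀ i, c (i + 1) =
      c i ^^^ r i ^^^ (if (c i).testBit i then 2 ^ i * (b : ℤ) else 0))
    (hr : ∀ i, r (i + 1) =
      2 * (((~~~(c i)) &&& r i)
        ^^^ ((r i) &&& (if (c i).testBit i then 2 ^ i * (b : ℤ) else 0))
        ^^^ ((if (c i).testBit i then 2 ^ i * (b : ℤ) else 0) &&& (~~~(c i)))))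
    (hdvd : b ∣ a) :
    ((a / b : ℕ) : ℤ) = ∑ i ∈ Finset.range (1 + Nat.size a - Nat.size b),
      (if (c i).testBit i then (2 : ℤ) ^ i else 0) := by
  obtain ⟨q, rfl⟩ := hdvd
  have hlop : IsLopsidedDivision (b * q : ℕ) b c r := ⟨hc0, hr0, hc, hr⟩
  rw [Nat.mul_div_cancel_left q hb.pos]
  exact hlop.eq_diagonalReadout ((odd_coe_nat b).mpr hb) (Nat.cast_mul b q)
    (natCast_nonneg q) (by exact_mod_cast Nat.lt_two_pow_one_add_size_sub_size hb.pos rfl)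

/-- Quotient readout for lopsided division: if `b` divides `a`, then with
`Γ = 1 + Nat.size a - Nat.size b` the quotient `a / b` is given by the diagonal bits
of the algorithm. -/
theorem lopsided_division_quotient (a b : ℕ) (ha : 0 < a) (hb0 : 0 < b)
    (hb : Odd b) (hba : b ≤ a) (c r : ℕ → ℤ)
    (hc0 : c 0 = (a : ℤ)) (hr0 : r 0 = 0)
    (hc : ∀ i, c (i + 1) =
      c i ^^^ r i ^^^ (if (c i).testBit i then 2 ^ i * (b : ℤ) else 0))
    (hr : ∀ i, r (i + 1) =
      2 * (((~~~(c i)) &&& r i)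
        ^^^ ((r i) &&& (if (c i).testBit i then 2 ^ i * (b : ℤ) else 0))
        ^^^ ((if (c i).testBit i then 2 ^ i * (b : ℤ) else 0) &&& (~~~(c i)))))
    (hdvd : b ∣ a) :
    ((a / b : ℕ) : ℤ) = ∑ i ∈ Finset.range (1 + Nat.size a - Nat.size b),
      (if (c i).testBit i then (2 : ℤ) ^ i else 0) :=
  lopsided_division_quotient_general a b hb c r hc0 hr0 hc hr hdvd
end

section
/- Addition as the limit of the XOR/carry iteration: let a b : ℤ and define u, v : ℕ → ℤ by u 0 = a, v 0 = b, u (k+1) = u k ^^^ v k, and v (k+1) = 2 * (u k &&& v k). Then in the 2-adic integers ℤ_[2], the sequence ((u k : ℤ_[2]))_k converges to ((a + b : ℤ) : ℤ_[2]) and the carry sequence ((v k : ℤ_[2]))_k converges to 0; that is, (a+b, 0) is the limiting fixed point of the map A(u,v) = (u XOR v, shift(u AND v)). -/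
/-!
One step of the iteration preserves the sum, because bitwise `x + y = (x ^^^ y) + 2 * (x &&& y)`:
the xor is the sum without carries and the and is the carry. The carry also gains a trailing zero
bit at every step (if `2 ^ k ∣ y` then `2 ^ k ∣ x &&& y`), so `2 ^ k ∣ v k`. Hence `v k → 0`
2-adically and `u k = (a + b) - v k → a + b`.
-/

open Filter Topology

namespace Nat

theorem bitwise_add_mul_bitwise {f g : Bool → Bool → Bool} (hf : f false false = false)
    (hg : g false false = false) {c d e : ℕ}
    (h : ∀ a b, (f a b).toNat + c * (g a b).toNat = d * a.toNat + e * b.toNat) (m n : ℕ) :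
    bitwise f m n + c * bitwise g m n = d * m + e * n := by
  induction m using Nat.binaryRec generalizing n with
  | zero =>
    have h0 := h false true
    simp only [Bool.toNat_false, Bool.toNat_true, mul_zero, mul_one, zero_add] at h0
    subst h0
    rw [bitwise_zero_left, bitwise_zero_left]
    cases f false true <;> cases g false true <;> simp [add_mul]
  | bit a m ih =>
    obtain ⟨b, n, rfl⟩ : ∃ b n', n = bit b n' := ⟨n.bodd, n.div2, (bit_bodd_div2 n).symm⟩
    rw [bitwise_bit hf, bitwise_bit hg]
    simp only [bit_val]
    linear_combination 2 * ih n + h a b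

theorem xor_add_two_mul_and (m n : ℕ) : (m ^^^ n) + 2 * (m &&& n) = m + n := by
  have key := bitwise_add_mul_bitwise (f := bne) (g := and) (c := 2) (d := 1) (e := 1) rfl rfl
    (by decide) m n
  simp only [one_mul] at key
  exact key

theorem ldiff_add_and (m n : ℕ) : ldiff m n + (m &&& n) = m := by
  have key := bitwise_add_mul_bitwise (f := fun a b => a && !b) (g := and) (c := 1) (d := 1)
    (e := 0) rfl rfl (by decide) m n
  simp only [one_mul, zero_mul, add_zero] at key
  exact key

theorem lor_add_land (m n : ℕ) : (m ||| n) + (m &&& n) = m + n := by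
  have key := bitwise_add_mul_bitwise (f := or) (g := and) (c := 1) (d := 1) (e := 1) rfl rfl
    (by decide) m n
  simp only [one_mul] at key
  exact key

end Nat

namespace Int

theorem xor_add_two_mul_and (x y : ℤ) : (x ^^^ y) + 2 * (x &&& y) = x + y := by
  change Int.xor x y + 2 * Int.land x y = x + y
  rcases x with m | m <;> rcases y with n | n <;>
    simp only [Int.xor, Int.land, ofNat_eq_natCast, negSucc_eq]
  -- `-[m+1]` has the bits of `m` complemented, so `Int.land` turns into `Nat.ldiff` or `|||`
  · exact_mod_cast Nat.xor_add_two_mul_and m n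
  · have := Nat.xor_add_two_mul_and m n
    have := Nat.ldiff_add_and m n
    omega
  · have := Nat.xor_add_two_mul_and m n
    have := Nat.ldiff_add_and n m
    have := Nat.land_comm m n
    omega
  · have := Nat.xor_add_two_mul_and m n
    have := Nat.lor_add_land m n
    omega

theorem land_two_mul (x y : ℤ) : x &&& 2 * y = 2 * (x.div2 &&& y) := by
  change land x (2 * y) = 2 * land x.div2 y
  have hy : 2 * y = bit false y := by simp [bit_val]
  conv_lhs => rw [← bit_decomp x, hy, land_bit]
  simp [bit_val]

theorem two_pow_dvd_land_of_dvd_right {k : ℕ} {y : ℤ} (hy : 2 ^ k ∣ y) (x : ℤ) :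
    2 ^ k ∣ x &&& y := by
  induction k generalizing x y with
  | zero => exact one_dvd _
  | succ k ih =>
    obtain ⟨z, rfl⟩ := hy
    rw [pow_succ', mul_assoc, land_two_mul]
    exact mul_dvd_mul_left 2 (ih (dvd_mul_right _ _) _)

end Int

theorem PadicInt.tendsto_zero_of_pow_dvd {p : ℕ} [Fact p.Prime] {x : ℕ → ℤ_[p]}
    (hx : ∀ k, (p : ℤ_[p]) ^ k ∣ x k) : Tendsto x atTop (𝓝 0) := by
  have hp : ‖(p : ℤ_[p])‖ < 1 := norm_natCast_lt_one_iff.2 dvd_rfl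
  refine squeeze_zero_norm (fun k => ?_) (tendsto_pow_atTop_nhds_zero_of_lt_one (norm_nonneg _) hp)
  obtain ⟨c, hc⟩ := hx k
  rw [hc, norm_mul, norm_pow]
  exact mul_le_of_le_one_right (by positivity) (norm_le_one c)

/-- Addition as the limit of the XOR/carry iteration: the sequence `u` converges
2-adically to `a + b` and the carry sequence `v` converges to `0`. -/
theorem addition_xor_carry_limit (a b : ℤ) (u v : ℕ → ℤ)
    (hu0 : u 0 = a) (hv0 : v 0 = b)
    (hu : ∀ k, u (k + 1) = u k ^^^ v k)
    (hv : ∀ k, v (k + 1) = 2 * (u k &&& v k)) :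
    Filter.Tendsto (fun k => ((u k : ℤ_[2]))) Filter.atTop (nhds ((a + b : ℤ) : ℤ_[2])) ∧
    Filter.Tendsto (fun k => ((v k : ℤ_[2]))) Filter.atTop (nhds 0) := by
  have hsum : ∀ k, u k + v k = a + b := by
    intro k
    induction k with
    | zero => rw [hu0, hv0]
    | succ k ih => rw [hu, hv, Int.xor_add_two_mul_and, ih]
  have hdvd : ∀ k, (2 : ℤ) ^ k ∣ v k := by
    intro k
    induction k with
    | zero => exact one_dvd _
    | succ k ih =>
      rw [hv, pow_succ']
      exact mul_dvd_mul_left 2 (Int.two_pow_dvd_land_of_dvd_right ih _)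
  have hv_lim : Tendsto (fun k => (v k : ℤ_[2])) atTop (𝓝 0) :=
    PadicInt.tendsto_zero_of_pow_dvd fun k => (PadicInt.pow_p_dvd_int_iff k (v k)).2 (hdvd k)
  refine ⟨?_, hv_lim⟩
  have hu_eq : (fun k => (u k : ℤ_[2])) = fun k => ((a + b : ℤ) : ℤ_[2]) - v k := by
    funext k
    rw [← hsum k]
    push_cast
    ring
  simpa [hu_eq] using hv_lim.const_sub ((a + b : ℤ) : ℤ_[2])
end

section
/- Hamming weight via elementary symmetric functions over 𝔽₂: let m : ℕ, let s : Fin m → Bool be a binary string, and let w = (Finset.univ.filter (fun i => s i = true)).card be its Hamming weight. Then for every j : ℕ, the value of the elementary symmetric function of degree 2^j evaluated at s over the field of two elements equals the j-th binary digit of w; that is, ∑_{T ∈ Finset.powersetCard (2^j) Finset.univ} ∏_{i ∈ T} (if s i then (1 : ZMod 2) else 0) = (if w.testBit j then 1 else 0). Consequently, the Hamming weight satisfies Wt(s) = ∑_j σ_{2^j}(s) · 2^j. -/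
/-- Parity of `choose w (2^j)` equals the `j`-th binary digit of `w` (special case of Lucas). -/
lemma choose_two_pow_mod_two (j : ℕ) : ∀ w : ℕ, w.choose (2 ^ j) % 2 = w / 2 ^ j % 2 := by
  induction j with
  | zero => intro w; simp
  | succ j ih =>
    intro w
    haveI : Fact (Nat.Prime 2) := ⟨Nat.prime_two⟩
    have h := (Choose.choose_modEq_choose_mod_mul_choose_div_nat
      (p := 2) (n := w) (k := 2 ^ (j + 1)))
    have h2 : 2 ^ (j + 1) % 2 = 0 := by
      simp [pow_succ, Nat.mul_mod_left]
    have h3 : 2 ^ (j + 1) / 2 = 2 ^ j := by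
      rw [pow_succ]; exact Nat.mul_div_cancel _ (by norm_num)
    rw [h2, h3, Nat.choose_zero_right, one_mul] at h
    have := ih (w / 2)
    unfold Nat.ModEq at h
    rw [h, this, Nat.div_div_eq_div_mul]
    ring_nf

/-- Hamming weight via elementary symmetric functions over `𝔽₂`: for a binary string
`s : Fin m → Bool` of Hamming weight `w`, the elementary symmetric function of degree
`2^j` of the bits of `s`, evaluated in `ZMod 2`, equals the `j`-th binary digit of `w`. -/
theorem hamming_weight_symmetric_functions (m : ℕ) (s : Fin m → Bool) (w : ℕ)
    (hw : w = (Finset.univ.filter (fun i => s i = true)).card) :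
    ∀ j : ℕ,
      (∑ T ∈ Finset.powersetCard (2 ^ j) (Finset.univ : Finset (Fin m)),
        ∏ i ∈ T, (if s i then (1 : ZMod 2) else 0))
      = (if w.testBit j then 1 else 0) := by
  intro j
  set A : Finset (Fin m) := Finset.univ.filter (fun i => s i = true) with hA
  -- rewrite each product as an indicator
  have hprod : ∀ T : Finset (Fin m),
      (∏ i ∈ T, (if s i then (1 : ZMod 2) else 0)) = if T ⊆ A then 1 else 0 := by
    intro T
    rw [Finset.prod_boole]
    congr 1
    simp only [eq_iff_iff]
    constructor
    · intro h i hi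
      simp [hA, Finset.mem_filter, h i hi]
    · intro h i hi
      have := h hi
      simpa [hA, Finset.mem_filter] using this
  simp only [hprod]
  rw [Finset.sum_boole]
  have hfil : (Finset.powersetCard (2 ^ j) (Finset.univ : Finset (Fin m))).filter
      (fun T => T ⊆ A) = Finset.powersetCard (2 ^ j) A := by
    ext T
    simp [Finset.mem_filter, Finset.mem_powersetCard, and_comm]
  rw [hfil, Finset.card_powersetCard, ← hw]
  -- now reduce to the parity of the binomial coefficient
  have key : w.choose (2 ^ j) % 2 = w / 2 ^ j % 2 := choose_two_pow_mod_two j w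
  have hcast : ((w.choose (2 ^ j) : ℕ) : ZMod 2) = ((w.choose (2 ^ j) % 2 : ℕ) : ZMod 2) :=
    (ZMod.natCast_mod _ 2).symm
  rw [hcast, key, Nat.testBit_eq_decide_div_mod_eq]
  have : w / 2 ^ j % 2 = 0 ∨ w / 2 ^ j % 2 = 1 := Nat.mod_two_eq_zero_or_one _
  rcases this with h | h <;> simp [h]
end

section
/- Core lemma of the multiplicative Boolean factoring (MBF) algorithm: let a b b' m : ℕ with b odd, Nat.size a ≤ m, and b * b' ≡ 1 (mod 2^m) (so b' is the truncation to m bits of the 2-adic inverse of b). Then b divides a if and only if b * ((a * b') % 2^m) = a; in that case the quotient a / b equals (a * b') % 2^m, i.e., the quotient is read off from the truncated product a · b⁻¹. -/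
/-- Core lemma of the multiplicative Boolean factoring (MBF) algorithm: if `b` is odd,
`a` has at most `m` bits, and `b' ` is an inverse of `b` modulo `2^m` (the `m`-bit
truncation of the 2-adic inverse of `b`), then `b ∣ a` iff `b * ((a * b') % 2^m) = a`,
and in that case the quotient `a / b` equals `(a * b') % 2^m`. -/
theorem mbf_core (a b b' m : ℕ) (hb : Odd b) (hm : Nat.size a ≤ m)
    (hinv : Nat.ModEq (2 ^ m) (b * b') 1) :
    (b ∣ a ↔ b * ((a * b') % 2 ^ m) = a) ∧
    (b ∣ a → a / b = (a * b') % 2 ^ m) := by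
  have ha : a < 2 ^ m := Nat.size_le.mp hm
  have hb0 : 0 < b := hb.pos
  have key : b ∣ a → (a * b') % 2 ^ m = a / b := by
    rintro ⟨q, rfl⟩
    rw [Nat.mul_div_cancel_left q hb0]
    have h1 : Nat.ModEq (2 ^ m) (b * q * b') q := by
      calc b * q * b' = q * (b * b') := by ring
        _ ≡ q * 1 [MOD 2 ^ m] := Nat.ModEq.mul_left q hinv
        _ = q := by ring
    have hq : q < 2 ^ m :=
      lt_of_le_of_lt (Nat.le_mul_of_pos_left q hb0) ha
    calc (b * q * b') % 2 ^ m = q % 2 ^ m := h1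
      _ = q := Nat.mod_eq_of_lt hq
  refine ⟨⟨fun h => ?_, fun h => ⟨_, h.symm⟩⟩, fun h => (key h).symm⟩
  rw [key h, Nat.mul_div_cancel' h]
end
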